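/- For every integer n, BP(n) − i·BP(n+1) − j·BP(n+2) − ij·BP(n+3) = 2·(q(n+1) − P(n+5))·1 + 2·P(n+5)·i + 2·P(n+4)·j − 2·P(n+3)·ij. -/

import Mathlib

open scoped TensorProduct

noncomputable def bi : ℂ ⊗[ℝ] ℂ := Complex.I ⊗ₜ[ℝ] 1
noncomputable def bj : ℂ ⊗[ℝ] ℂ := (1 : ℂ) ⊗ₜ[ℝ] Complex.I
noncomputable def bij : ℂ ⊗[ℝ] ℂ := Complex.I ⊗ₜ[ℝ] Complex.I

/-- The bicomplex Pell number `BP n = P n + P (n+1) i + P (n+2) j + P (n+3) ij`. -/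
noncomputable def BP (P : ℤ → ℤ) (n : ℤ) : ℂ ⊗[ℝ] ℂ :=
  (P n : ℝ) • (1 : ℂ ⊗[ℝ] ℂ) + (P (n + 1) : ℝ) • bi + (P (n + 2) : ℝ) • bj +
    (P (n + 3) : ℝ) • bij

/-!
Multiplication by `i`, `j` and `ij` permutes the coordinates of a bicomplex number in the basis
`1, i, j, ij` up to sign, so the left-hand side can be computed coordinatewise. In the `i`, `j`
and `ij` coordinates the Pell terms cancel in pairs; the real coordinate is
`P n + P (n+2) + P (n+4) - P (n+6) = 2 (P n + P (n+1)) - 2 P (n+5)`, and `q (n+1) = P n + P (n+1)`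
because both sides solve the Pell recurrence with the same two initial values.
-/

def IsPellLike {R : Type*} [Ring R] (X : ℤ → R) : Prop :=
  ∀ n : ℤ, X (n + 2) = 2 * X (n + 1) + X n

namespace IsPellLike

variable {R : Type*} [Ring R] {X Y : ℤ → R}

theorem eq_of_eq_of_eq (hX : IsPellLike X) (hY : IsPellLike Y) (h0 : X 0 = Y 0)
    (h1 : X 1 = Y 1) : X = Y := by
  have hpair : ∀ n : ℤ, X n = Y n ∧ X (n + 1) = Y (n + 1) := by
    intro n
    induction n using Int.induction_on with
    | zero => exact ⟨h0, h1⟩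
    | succ k ih =>
      refine ⟨ih.2, ?_⟩
      rw [add_assoc, one_add_one_eq_two, hX, hY, ih.1, ih.2]
    | pred k ih =>
      have hX' := hX (-k - 1)
      have hY' := hY (-k - 1)
      rw [show -(k : ℤ) - 1 + 2 = -k + 1 by ring, sub_add_cancel] at hX' hY'
      refine ⟨?_, by rw [sub_add_cancel]; exact ih.1⟩
      rw [eq_sub_of_add_eq' hX'.symm, eq_sub_of_add_eq' hY'.symm, ih.1, ih.2]
  exact funext fun n => (hpair n).1

theorem shift (hX : IsPellLike X) (k : ℤ) : IsPellLike (fun n => X (n + k)) := by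
  intro n
  simpa only [add_right_comm _ k] using hX (n + k)

theorem add (hX : IsPellLike X) (hY : IsPellLike Y) : IsPellLike (X + Y) := by
  intro n
  simp only [Pi.add_apply, hX n, hY n]
  noncomm_ring

end IsPellLike

theorem modifiedPell_succ_eq_add {P q : ℤ → ℤ} (hP : IsPellLike P) (hP0 : P 0 = 0)
    (hP1 : P 1 = 1) (hq : IsPellLike q) (hq0 : q 0 = 1) (hq1 : q 1 = 1) (m : ℤ) :
    q (m + 1) = P m + P (m + 1) := by
  have h := (hq.shift 1).eq_of_eq_of_eq (hP.add (hP.shift 1)) ?_ ?_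
  · exact congrFun h m
  · simp [hP0, hP1, hq1]
  · have hq2 : q 2 = 3 := by simpa [hq0, hq1] using hq 0
    have hP2 : P 2 = 2 := by simpa [hP0, hP1] using hP 0
    norm_num [hP1, hP2, hq2]

open Algebra.TensorProduct in
theorem bi_mul_bi : bi * bi = -1 := by
  simp [bi, tmul_mul_tmul, one_def, TensorProduct.neg_tmul]

open Algebra.TensorProduct in
theorem bj_mul_bj : bj * bj = -1 := by
  simp [bj, tmul_mul_tmul, one_def, TensorProduct.tmul_neg]

open Algebra.TensorProduct in
theorem bi_mul_bj : bi * bj = bij := by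
  simp [bi, bj, bij, tmul_mul_tmul]

/- The additive structure of `ℂ ⊗[ℝ] ℂ` here comes through `NormedSpace.toModule`, which is not
reducibly the one of its ring structure; hence the sign rules are applied by `exact`. -/

theorem bi_mul_bij : bi * bij = -bj := by
  rw [← bi_mul_bj, ← mul_assoc, bi_mul_bi]
  exact neg_one_mul bj

theorem bj_mul_bij : bj * bij = -bi := by
  rw [← bi_mul_bj, mul_left_comm, bj_mul_bj]
  exact mul_neg_one bi

theorem bij_mul_bij : bij * bij = 1 := by
  rw [← bi_mul_bj, mul_mul_mul_comm, bi_mul_bi, bj_mul_bj]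
  exact (neg_mul_neg 1 1).trans (mul_one 1)

noncomputable def bicomplexMk (a b c d : ℝ) : ℂ ⊗[ℝ] ℂ :=
  a • (1 : ℂ ⊗[ℝ] ℂ) + b • bi + c • bj + d • bij

theorem BP_eq_bicomplexMk (P : ℤ → ℤ) (n : ℤ) :
    BP P n = bicomplexMk (P n) (P (n + 1)) (P (n + 2)) (P (n + 3)) := rfl

theorem bicomplexMk_sub (a b c d a' b' c' d' : ℝ) :
    bicomplexMk a b c d - bicomplexMk a' b' c' d' =
      bicomplexMk (a - a') (b - b') (c - c') (d - d') := by
  simp only [bicomplexMk, sub_smul]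
  abel

theorem bi_mul_bicomplexMk (a b c d : ℝ) :
    bi * bicomplexMk a b c d = bicomplexMk (-b) a (-d) c := by
  simp only [bicomplexMk, mul_add, mul_smul_comm, mul_one, bi_mul_bi, bi_mul_bj, bi_mul_bij]
  module

theorem bj_mul_bicomplexMk (a b c d : ℝ) :
    bj * bicomplexMk a b c d = bicomplexMk (-c) (-d) a b := by
  simp only [bicomplexMk, mul_add, mul_smul_comm, mul_one, mul_comm bj bi, bj_mul_bj, bi_mul_bj,
    bj_mul_bij]
  module

theorem bij_mul_bicomplexMk (a b c d : ℝ) :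
    bij * bicomplexMk a b c d = bicomplexMk d (-c) (-b) a := by
  simp only [bicomplexMk, mul_add, mul_smul_comm, mul_one, mul_comm bij bi, mul_comm bij bj,
    bi_mul_bij, bj_mul_bij, bij_mul_bij]
  module

theorem bicomplexPell_alt_sum' (P q : ℤ → ℤ)
    (hP : ∀ n : ℤ, P (n + 2) = 2 * P (n + 1) + P n) (hP0 : P 0 = 0) (hP1 : P 1 = 1)
    (hq : ∀ n : ℤ, q (n + 2) = 2 * q (n + 1) + q n) (hq0 : q 0 = 1) (hq1 : q 1 = 1)
    (n : ℤ) :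
    BP P n - bi * BP P (n + 1) - bj * BP P (n + 2) - bij * BP P (n + 3) =
      (2 * ((q (n + 1) : ℝ) - (P (n + 5) : ℝ))) • (1 : ℂ ⊗[ℝ] ℂ) +
        (2 * (P (n + 5) : ℝ)) • bi + (2 * (P (n + 4) : ℝ)) • bj -
        (2 * (P (n + 3) : ℝ)) • bij := by
  have hq1P := modifiedPell_succ_eq_add hP hP0 hP1 hq hq0 hq1 n
  have hP2 := hP n
  have hP6 : P (n + 6) = 2 * P (n + 5) + P (n + 4) := by simpa [add_assoc] using hP (n + 4)
  have hrhs (a b c d : ℝ) :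
      a • (1 : ℂ ⊗[ℝ] ℂ) + b • bi + c • bj - d • bij = bicomplexMk a b c (-d) := by
    rw [bicomplexMk, neg_smul, ← sub_eq_add_neg]
  rw [hrhs]
  simp only [BP_eq_bicomplexMk, bi_mul_bicomplexMk, bj_mul_bicomplexMk, bij_mul_bicomplexMk,
    bicomplexMk_sub]
  norm_num only [add_assoc]
  congr 1 <;> push_cast [hq1P, hP2, hP6] <;> ring
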